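/- arXiv:2510.08309 — 6 statements merged into one kernel-verified Lean document; each statement's English description precedes it below -/
import Mathlib

section
/- Let b1 and b2 be independent real-valued random variables on a probability space with E[b1] = 0 and b1 integrable. Fix real numbers beta1 and beta2, and set alpha1 = -beta1 * sin(beta2) and alpha2 = beta1 * cos(beta2). Then E[-(beta1 + b1) * sin(beta2 + b2)] = alpha1 * E[cos(b2)] - alpha2 * E[sin(b2)]. -/
open MeasureTheory ProbabilityTheory

/-- First-harmonic sine-coefficient part of Proposition 1: if `b1` and `b2` are independent,
`E[b1] = 0`, and `alpha1 = -beta1 * sin beta2`, `alpha2 = beta1 * cos beta2`, then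
`E[-(beta1 + b1) * sin(beta2 + b2)] = alpha1 * E[cos b2] - alpha2 * E[sin b2]`. -/
theorem sts_sine_coefficient_bias
    {Ω : Type*} [MeasurableSpace Ω] (P : Measure Ω) [IsProbabilityMeasure P]
    (b1 b2 : Ω → ℝ) (hb1 : Measurable b1) (hb2 : Measurable b2)
    (hindep : IndepFun b1 b2 P) (hint : Integrable b1 P)
    (hmean : ∫ ω, b1 ω ∂P = 0)
    (beta1 beta2 alpha1 alpha2 : ℝ)
    (halpha1 : alpha1 = -beta1 * Real.sin beta2)
    (halpha2 : alpha2 = beta1 * Real.cos beta2) :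
    ∫ ω, -(beta1 + b1 ω) * Real.sin (beta2 + b2 ω) ∂P =
      alpha1 * (∫ ω, Real.cos (b2 ω) ∂P) - alpha2 * (∫ ω, Real.sin (b2 ω) ∂P) := by
  have hfm : Measurable (fun ω => Real.sin (beta2 + b2 ω)) :=
    Real.measurable_sin.comp (measurable_const.add hb2)
  have hfint : Integrable (fun ω => Real.sin (beta2 + b2 ω)) P :=
    (integrable_const (1 : ℝ)).mono' hfm.aestronglyMeasurable
      (Filter.Eventually.of_forall fun ω => by
        simpa using Real.abs_sin_le_one (beta2 + b2 ω))
  have hcint : Integrable (fun ω => Real.cos (b2 ω)) P :=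
    (integrable_const (1 : ℝ)).mono'
      ((Real.measurable_cos.comp hb2).aestronglyMeasurable)
      (Filter.Eventually.of_forall fun ω => by simpa using Real.abs_cos_le_one (b2 ω))
  have hsint : Integrable (fun ω => Real.sin (b2 ω)) P :=
    (integrable_const (1 : ℝ)).mono'
      ((Real.measurable_sin.comp hb2).aestronglyMeasurable)
      (Filter.Eventually.of_forall fun ω => by simpa using Real.abs_sin_le_one (b2 ω))
  have hprodint : Integrable (fun ω => b1 ω * Real.sin (beta2 + b2 ω)) P :=
    by
      have h := hint.bdd_mul hfm.aestronglyMeasurable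
        (c := 1) (Filter.Eventually.of_forall fun ω => by simpa using Real.abs_sin_le_one (beta2 + b2 ω))
      simpa [mul_comm] using h
  have hindep' : IndepFun b1 (fun ω => Real.sin (beta2 + b2 ω)) P :=
    hindep.comp measurable_id (Real.measurable_sin.comp (measurable_const.add measurable_id))
  have hzero : ∫ ω, b1 ω * Real.sin (beta2 + b2 ω) ∂P = 0 := by
    rw [hindep'.integral_fun_mul_eq_mul_integral hint.aestronglyMeasurable hfm.aestronglyMeasurable,
      hmean, zero_mul]
  have hexp : ∀ ω, -(beta1 + b1 ω) * Real.sin (beta2 + b2 ω)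
      = -beta1 * Real.sin (beta2 + b2 ω) - b1 ω * Real.sin (beta2 + b2 ω) := by
    intro ω; ring
  rw [integral_congr_ae (Filter.Eventually.of_forall hexp),
    integral_sub (hfint.const_mul _) hprodint, hzero, sub_zero, integral_const_mul]
  have hsin : ∫ ω, Real.sin (beta2 + b2 ω) ∂P
      = Real.sin beta2 * (∫ ω, Real.cos (b2 ω) ∂P)
        + Real.cos beta2 * (∫ ω, Real.sin (b2 ω) ∂P) := by
    rw [← integral_const_mul, ← integral_const_mul,
      ← integral_add (hcint.const_mul _) (hsint.const_mul _)]
    exact integral_congr_ae (Filter.Eventually.of_forall fun ω => Real.sin_add _ _)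
  rw [hsin, halpha1, halpha2]; ring
end

section
/- Let b be a real-valued random variable on a probability space whose law is symmetric about zero (b and -b have the same distribution) and suppose E[cos(b)] > 0. Let beta2 be a real number with -pi < beta2 <= pi. Then the two-argument arctangent atan2(E[sin(beta2 + b)], E[cos(beta2 + b)]) equals beta2; equivalently, the argument of the complex number E[cos(beta2+b)] + i*E[sin(beta2+b)] equals beta2. -/
/-!
Expanding `cos (β + b)` and `sin (β + b)` by the addition formulas, the expectations become
`cos β · E[cos b] - sin β · E[sin b]` and `sin β · E[cos b] + cos β · E[sin b]`. Symmetry of the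
law of `b` kills the odd moment `E[sin b]`, so the point `E[cos (β + b)] + i E[sin (β + b)]` is
`E[cos b] · e^{iβ}`, a positive multiple of `e^{iβ}`, whose argument is `β` for `β ∈ (-π, π]`.
-/

open MeasureTheory

section

variable {Ω : Type*} [MeasurableSpace Ω] {P : Measure Ω} {b : Ω → ℝ}

theorem integral_comp_eq_zero_of_map_eq_map_neg {E : Type*} [NormedAddCommGroup E]
    [NormedSpace ℝ E] (hb : Measurable b) (hsym : P.map b = P.map (fun ω => -b ω))
    {f : ℝ → E} (hf : Continuous f) (hodd : ∀ x, f (-x) = -f x) :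
    ∫ ω, f (b ω) ∂P = 0 := by
  have hself : ∫ ω, f (b ω) ∂P = -∫ ω, f (b ω) ∂P := calc
    ∫ ω, f (b ω) ∂P = ∫ x, f x ∂(P.map b) :=
      (integral_map hb.aemeasurable hf.aestronglyMeasurable).symm
    _ = ∫ x, f x ∂(P.map (fun ω => -b ω)) := by rw [hsym]
    _ = ∫ ω, f (-b ω) ∂P := integral_map hb.neg.aemeasurable hf.aestronglyMeasurable
    _ = -∫ ω, f (b ω) ∂P := by simp only [hodd, integral_neg]
  rwa [eq_neg_iff_add_eq_zero, ← two_smul ℝ, smul_eq_zero_iff_right two_ne_zero] at hself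

variable [IsFiniteMeasure P]

theorem integrable_cos_comp (hb : Measurable b) : Integrable (fun ω => Real.cos (b ω)) P :=
  .of_bound (Real.measurable_cos.comp hb).aestronglyMeasurable 1
    (.of_forall fun ω => Real.abs_cos_le_one (b ω))

theorem integrable_sin_comp (hb : Measurable b) : Integrable (fun ω => Real.sin (b ω)) P :=
  .of_bound (Real.measurable_sin.comp hb).aestronglyMeasurable 1
    (.of_forall fun ω => Real.abs_sin_le_one (b ω))

theorem integral_cos_add_of_integral_sin_eq_zero (hb : Measurable b)
    (hsin : ∫ ω, Real.sin (b ω) ∂P = 0) (β : ℝ) :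
    ∫ ω, Real.cos (β + b ω) ∂P = Real.cos β * ∫ ω, Real.cos (b ω) ∂P := by
  simp_rw [Real.cos_add]
  rw [integral_sub ((integrable_cos_comp hb).const_mul _) ((integrable_sin_comp hb).const_mul _),
    integral_const_mul, integral_const_mul, hsin, mul_zero, sub_zero]

theorem integral_sin_add_of_integral_sin_eq_zero (hb : Measurable b)
    (hsin : ∫ ω, Real.sin (b ω) ∂P = 0) (β : ℝ) :
    ∫ ω, Real.sin (β + b ω) ∂P = Real.sin β * ∫ ω, Real.cos (b ω) ∂P := by
  simp_rw [Real.sin_add]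
  rw [integral_add ((integrable_cos_comp hb).const_mul _) ((integrable_sin_comp hb).const_mul _),
    integral_const_mul, integral_const_mul, hsin, mul_zero, add_zero]

end

theorem Complex.arg_ofReal_cos_mul_add_I_mul_ofReal_sin_mul {r β : ℝ} (hr : 0 < r)
    (hβ : β ∈ Set.Ioc (-Real.pi) Real.pi) :
    arg (((Real.cos β * r : ℝ) : ℂ) + I * ((Real.sin β * r : ℝ) : ℂ)) = β := by
  have hpolar : ((Real.cos β * r : ℝ) : ℂ) + I * ((Real.sin β * r : ℝ) : ℂ)
      = r * (cos β + sin β * I) := by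
    push_cast
    ring
  rw [hpolar, arg_real_mul _ hr, arg_cos_add_sin_mul_I hβ]

/-- Unbiased phase-shift conclusion after Corollary 1: if the law of `b` is symmetric about
zero and `E[cos b] > 0`, then for `beta2 ∈ (-π, π]` the two-argument arctangent
`atan2(E[sin(beta2 + b)], E[cos(beta2 + b)])`, realized as the argument of the complex number
`E[cos(beta2 + b)] + i * E[sin(beta2 + b)]`, equals `beta2`. -/
theorem symmetric_law_phase_shift_unbiased
    {Ω : Type*} [MeasurableSpace Ω] (P : Measure Ω) [IsProbabilityMeasure P]
    (b : Ω → ℝ) (hb : Measurable b)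
    (hsym : Measure.map b P = Measure.map (fun ω => -b ω) P)
    (hcos : 0 < ∫ ω, Real.cos (b ω) ∂P)
    (beta2 : ℝ) (h1 : -Real.pi < beta2) (h2 : beta2 ≤ Real.pi) :
    Complex.arg (((∫ ω, Real.cos (beta2 + b ω) ∂P : ℝ) : ℂ) +
        Complex.I * ((∫ ω, Real.sin (beta2 + b ω) ∂P : ℝ) : ℂ)) = beta2 := by
  have hsin : ∫ ω, Real.sin (b ω) ∂P = 0 :=
    integral_comp_eq_zero_of_map_eq_map_neg hb hsym Real.continuous_sin Real.sin_neg
  rw [integral_cos_add_of_integral_sin_eq_zero hb hsin,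
    integral_sin_add_of_integral_sin_eq_zero hb hsin]
  exact Complex.arg_ofReal_cos_mul_add_I_mul_ofReal_sin_mul hcos ⟨h1, h2⟩
end

section
/- Let n and K be positive natural numbers with 2*K < n, and define the n-by-(2K+1) real matrix W whose row indexed by j in {0,...,n-1} is (1, sin(2*pi*1*j/n), cos(2*pi*1*j/n), ..., sin(2*pi*K*j/n), cos(2*pi*K*j/n)). Then the Gram matrix transpose(W) * W is the diagonal matrix whose (0,0) entry is n and whose remaining 2K diagonal entries all equal n/2. -/
open Matrix Finset



/-- The equispaced trigonometric design matrix: row `j ∈ {0,…,n-1}` is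
`(1, sin(2π·1·j/n), cos(2π·1·j/n), …, sin(2π·K·j/n), cos(2π·K·j/n))`.
Column `0` is the constant `1`; odd column `2k-1` carries `sin(2πkj/n)` and
even column `2k` carries `cos(2πkj/n)`. -/
noncomputable def designW (n K : ℕ) : Matrix (Fin n) (Fin (2 * K + 1)) ℝ :=
  fun j i =>
    if i.val = 0 then 1
    else if i.val % 2 = 1 then
      Real.sin (2 * Real.pi * (((i.val + 1) / 2 : ℕ) : ℝ) * (j.val : ℝ) / (n : ℝ))
    else
      Real.cos (2 * Real.pi * (((i.val / 2 : ℕ)) : ℝ) * (j.val : ℝ) / (n : ℝ))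


private lemma exp_sum_zero (n : ℕ) (hn : 0 < n) (m : ℤ) (h : ¬ (n:ℤ) ∣ m) :
    ∑ j ∈ Finset.range n, Complex.exp (((2 * Real.pi * m * j / n : ℝ) : ℂ) * Complex.I) = 0 := by
  have hn' : (n : ℂ) ≠ 0 := Nat.cast_ne_zero.mpr hn.ne'
  set z := Complex.exp (((2 * Real.pi * m / n : ℝ) : ℂ) * Complex.I) with hzdef
  have hzpow : ∀ j : ℕ, Complex.exp (((2 * Real.pi * m * j / n : ℝ) : ℂ) * Complex.I) = z ^ j := by
    intro j
    rw [hzdef, ← Complex.exp_nat_mul]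
    congr 1
    push_cast
    ring
  have hz1 : z ≠ 1 := by
    intro hzeq
    rw [hzdef, Complex.exp_eq_one_iff] at hzeq
    obtain ⟨k, hk⟩ := hzeq
    apply h
    refine ⟨k, ?_⟩
    have hI : (2 * (Real.pi:ℂ) * Complex.I : ℂ) ≠ 0 := by
      simp [Real.pi_ne_zero, Complex.I_ne_zero]
    have h2 : (2 * (Real.pi:ℂ) * Complex.I) * m = (2 * (Real.pi:ℂ) * Complex.I) * (k * n) := by
      push_cast at hk
      field_simp at hk
      linear_combination (2 * (Real.pi:ℂ) * Complex.I) * hk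
    have h3 : (m : ℂ) = (k : ℂ) * n := mul_left_cancel₀ hI h2
    exact_mod_cast h3.trans (mul_comm _ _)
  have hzn : z ^ n = 1 := by
    rw [hzdef, ← Complex.exp_nat_mul, show ((n:ℂ) * ((((2 * Real.pi * m / n : ℝ)) : ℂ) * Complex.I)) = m * (2 * Real.pi * Complex.I) by push_cast; field_simp]
    exact Complex.exp_int_mul_two_pi_mul_I m
  simp only [hzpow]
  rw [geom_sum_eq hz1, hzn]
  simp

private lemma sum_cos_int (n : ℕ) (hn : 0 < n) (m : ℤ) :
    ∑ j ∈ Finset.range n, Real.cos (2 * Real.pi * m * j / n) =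
      if (n:ℤ) ∣ m then (n:ℝ) else 0 := by
  split_ifs with hd
  · obtain ⟨t, rfl⟩ := hd
    have : ∀ j ∈ Finset.range n, Real.cos (2 * Real.pi * ((n*t : ℤ):ℝ) * j / n) = 1 := by
      intro j _
      rw [show (2 * Real.pi * ((n*t : ℤ):ℝ) * j / n) = ((t * j : ℤ) : ℝ) * (2 * Real.pi) by
        push_cast; field_simp]
      exact Real.cos_int_mul_two_pi _
    rw [Finset.sum_congr rfl this]
    simp
  · have hre : ∀ j ∈ Finset.range n, Real.cos (2 * Real.pi * m * j / n)
        = (Complex.exp (((2 * Real.pi * m * j / n : ℝ) : ℂ) * Complex.I)).re :=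
      fun j _ => (Complex.exp_ofReal_mul_I_re _).symm
    rw [Finset.sum_congr rfl hre, ← Complex.re_sum, exp_sum_zero n hn m hd]
    simp

private lemma sum_sin_int (n : ℕ) (hn : 0 < n) (m : ℤ) :
    ∑ j ∈ Finset.range n, Real.sin (2 * Real.pi * m * j / n) = 0 := by
  by_cases hd : (n:ℤ) ∣ m
  · obtain ⟨t, rfl⟩ := hd
    have : ∀ j ∈ Finset.range n, Real.sin (2 * Real.pi * ((n*t : ℤ):ℝ) * j / n) = 0 := by
      intro j _
      rw [show (2 * Real.pi * ((n*t : ℤ):ℝ) * j / n) = ((2 * t * j : ℤ) : ℝ) * Real.pi by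
        push_cast; field_simp]
      exact Real.sin_int_mul_pi _
    rw [Finset.sum_congr rfl this]
    simp
  · have him : ∀ j ∈ Finset.range n, Real.sin (2 * Real.pi * m * j / n)
        = (Complex.exp (((2 * Real.pi * m * j / n : ℝ) : ℂ) * Complex.I)).im :=
      fun j _ => (Complex.exp_ofReal_mul_I_im _).symm
    rw [Finset.sum_congr rfl him, ← Complex.im_sum, exp_sum_zero n hn m hd]
    simp

private lemma not_dvd_sub (n K k l : ℕ) (h : 2*K < n) (hk2 : k ≤ K) (hl2 : l ≤ K)
    (hkl : k ≠ l) : ¬ (n:ℤ) ∣ ((k:ℤ) - l) := by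
  intro hd
  have h3 : n ∣ ((k:ℤ) - l).natAbs := by
    have := Int.natAbs_dvd_natAbs.mpr hd
    simpa using this
  have h4 : n ≤ ((k:ℤ) - l).natAbs := Nat.le_of_dvd (by omega) h3
  omega

private lemma not_dvd_add (n K k l : ℕ) (h : 2*K < n) (hk1 : 1 ≤ k) (hk2 : k ≤ K)
    (hl1 : 1 ≤ l) (hl2 : l ≤ K) : ¬ (n:ℤ) ∣ ((k:ℤ) + l) := by
  intro hd
  have h4 := Int.le_of_dvd (by omega) hd
  omega

private lemma sum_sin_nat (n : ℕ) (hn : 0 < n) (k : ℕ) :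
    ∑ j ∈ Finset.range n, Real.sin (2 * Real.pi * (k:ℝ) * j / n) = 0 := by
  have := sum_sin_int n hn (k:ℤ)
  simpa using this

private lemma sum_cos_nat (n : ℕ) (hn : 0 < n) (k : ℕ) (h1 : 1 ≤ k) (h2 : k < n) :
    ∑ j ∈ Finset.range n, Real.cos (2 * Real.pi * (k:ℝ) * j / n) = 0 := by
  have hnd : ¬ (n:ℤ) ∣ (k:ℤ) := by
    intro hd
    have := Int.le_of_dvd (by omega) hd
    omega
  have := sum_cos_int n hn (k:ℤ)
  rw [if_neg hnd] at this
  simpa using this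

private lemma sum_sinsin (n K k l : ℕ) (hn : 0 < n) (h : 2*K < n) (hk1 : 1 ≤ k) (hk2 : k ≤ K)
    (hl1 : 1 ≤ l) (hl2 : l ≤ K) :
    ∑ j ∈ Finset.range n, Real.sin (2 * Real.pi * (k:ℝ) * j / n) *
      Real.sin (2 * Real.pi * (l:ℝ) * j / n) = if k = l then (n:ℝ)/2 else 0 := by
  have hterm : ∀ j ∈ Finset.range n,
      Real.sin (2 * Real.pi * (k:ℝ) * j / n) * Real.sin (2 * Real.pi * (l:ℝ) * j / n)
      = (Real.cos (2 * Real.pi * (((k:ℤ) - l : ℤ):ℝ) * j / n)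
          - Real.cos (2 * Real.pi * (((k:ℤ) + l : ℤ):ℝ) * j / n)) / 2 := by
    intro j _
    rw [show (2 * Real.pi * (((k:ℤ) - l : ℤ):ℝ) * (j:ℝ) / n)
          = 2 * Real.pi * (k:ℝ) * j / n - 2 * Real.pi * (l:ℝ) * j / n by push_cast; ring,
        show (2 * Real.pi * (((k:ℤ) + l : ℤ):ℝ) * (j:ℝ) / n)
          = 2 * Real.pi * (k:ℝ) * j / n + 2 * Real.pi * (l:ℝ) * j / n by push_cast; ring,
        Real.cos_sub, Real.cos_add]
    ring
  rw [Finset.sum_congr rfl hterm, ← Finset.sum_div, Finset.sum_sub_distrib,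
      sum_cos_int n hn ((k:ℤ) - l), sum_cos_int n hn ((k:ℤ) + l),
      if_neg (not_dvd_add n K k l h hk1 hk2 hl1 hl2)]
  by_cases hkl : k = l
  · subst hkl
    simp
  · rw [if_neg (not_dvd_sub n K k l h hk2 hl2 hkl), if_neg hkl]
    norm_num

private lemma sum_coscos (n K k l : ℕ) (hn : 0 < n) (h : 2*K < n) (hk1 : 1 ≤ k) (hk2 : k ≤ K)
    (hl1 : 1 ≤ l) (hl2 : l ≤ K) :
    ∑ j ∈ Finset.range n, Real.cos (2 * Real.pi * (k:ℝ) * j / n) *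
      Real.cos (2 * Real.pi * (l:ℝ) * j / n) = if k = l then (n:ℝ)/2 else 0 := by
  have hterm : ∀ j ∈ Finset.range n,
      Real.cos (2 * Real.pi * (k:ℝ) * j / n) * Real.cos (2 * Real.pi * (l:ℝ) * j / n)
      = (Real.cos (2 * Real.pi * (((k:ℤ) - l : ℤ):ℝ) * j / n)
          + Real.cos (2 * Real.pi * (((k:ℤ) + l : ℤ):ℝ) * j / n)) / 2 := by
    intro j _
    rw [show (2 * Real.pi * (((k:ℤ) - l : ℤ):ℝ) * (j:ℝ) / n)
          = 2 * Real.pi * (k:ℝ) * j / n - 2 * Real.pi * (l:ℝ) * j / n by push_cast; ring,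
        show (2 * Real.pi * (((k:ℤ) + l : ℤ):ℝ) * (j:ℝ) / n)
          = 2 * Real.pi * (k:ℝ) * j / n + 2 * Real.pi * (l:ℝ) * j / n by push_cast; ring,
        Real.cos_sub, Real.cos_add]
    ring
  rw [Finset.sum_congr rfl hterm, ← Finset.sum_div, Finset.sum_add_distrib,
      sum_cos_int n hn ((k:ℤ) - l), sum_cos_int n hn ((k:ℤ) + l),
      if_neg (not_dvd_add n K k l h hk1 hk2 hl1 hl2)]
  by_cases hkl : k = l
  · subst hkl
    simp
  · rw [if_neg (not_dvd_sub n K k l h hk2 hl2 hkl), if_neg hkl]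
    norm_num

private lemma sum_sincos (n k l : ℕ) (hn : 0 < n) :
    ∑ j ∈ Finset.range n, Real.sin (2 * Real.pi * (k:ℝ) * j / n) *
      Real.cos (2 * Real.pi * (l:ℝ) * j / n) = 0 := by
  have hterm : ∀ j ∈ Finset.range n,
      Real.sin (2 * Real.pi * (k:ℝ) * j / n) * Real.cos (2 * Real.pi * (l:ℝ) * j / n)
      = (Real.sin (2 * Real.pi * (((k:ℤ) + l : ℤ):ℝ) * j / n)
          + Real.sin (2 * Real.pi * (((k:ℤ) - l : ℤ):ℝ) * j / n)) / 2 := by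
    intro j _
    rw [show (2 * Real.pi * (((k:ℤ) - l : ℤ):ℝ) * (j:ℝ) / n)
          = 2 * Real.pi * (k:ℝ) * j / n - 2 * Real.pi * (l:ℝ) * j / n by push_cast; ring,
        show (2 * Real.pi * (((k:ℤ) + l : ℤ):ℝ) * (j:ℝ) / n)
          = 2 * Real.pi * (k:ℝ) * j / n + 2 * Real.pi * (l:ℝ) * j / n by push_cast; ring,
        Real.sin_sub, Real.sin_add]
    ring
  rw [Finset.sum_congr rfl hterm, ← Finset.sum_div, Finset.sum_add_distrib,
      sum_sin_int n hn ((k:ℤ) + l), sum_sin_int n hn ((k:ℤ) - l)]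
  norm_num

private noncomputable def trigCol (n v j : ℕ) : ℝ :=
  if v = 0 then 1
  else if v % 2 = 1 then
    Real.sin (2 * Real.pi * (((v + 1) / 2 : ℕ) : ℝ) * (j : ℝ) / (n : ℝ))
  else
    Real.cos (2 * Real.pi * (((v / 2 : ℕ)) : ℝ) * (j : ℝ) / (n : ℝ))

private lemma col_gram (n K : ℕ) (hn : 0 < n) (h : 2*K < n) (v w : ℕ)
    (hv : v < 2*K+1) (hw : w < 2*K+1) :
    ∑ j ∈ Finset.range n, trigCol n v j * trigCol n w j
      = if v = w then (if v = 0 then (n:ℝ) else (n:ℝ)/2) else 0 := by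
  rcases Nat.eq_zero_or_pos v with hv0 | hv0
  · subst hv0
    rcases Nat.eq_zero_or_pos w with hw0 | hw0
    · subst hw0
      simp [trigCol]
    · rw [if_neg (by omega : ¬ (0:ℕ) = w)]
      simp only [trigCol, eq_self_iff_true, if_true, if_neg hw0.ne', one_mul]
      by_cases hw2 : w % 2 = 1
      · simp only [if_pos hw2]
        exact sum_sin_nat n hn _
      · simp only [if_neg hw2]
        exact sum_cos_nat n hn (w/2) (by omega) (by omega)
  · rcases Nat.eq_zero_or_pos w with hw0 | hw0
    · subst hw0
      rw [if_neg (by omega : ¬ v = 0)]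
      simp only [trigCol, eq_self_iff_true, if_true, if_neg hv0.ne', mul_one]
      by_cases hv2 : v % 2 = 1
      · simp only [if_pos hv2]
        exact sum_sin_nat n hn _
      · simp only [if_neg hv2]
        exact sum_cos_nat n hn (v/2) (by omega) (by omega)
    · simp only [trigCol, if_neg hv0.ne', if_neg hw0.ne']
      by_cases hv2 : v % 2 = 1 <;> by_cases hw2 : w % 2 = 1
      · simp only [if_pos hv2, if_pos hw2]
        rw [sum_sinsin n K ((v+1)/2) ((w+1)/2) hn h (by omega) (by omega) (by omega) (by omega)]
        by_cases hvw : v = w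
        · subst hvw
          simp
        · rw [if_neg (show ¬ (v+1)/2 = (w+1)/2 by omega), if_neg hvw]
      · simp only [if_pos hv2, if_neg hw2]
        rw [if_neg (by omega : ¬ v = w)]
        exact sum_sincos n _ _ hn
      · simp only [if_neg hv2, if_pos hw2]
        rw [if_neg (by omega : ¬ v = w)]
        have := sum_sincos n ((w+1)/2) (v/2) hn
        rw [← this]
        exact Finset.sum_congr rfl fun j _ => mul_comm _ _
      · simp only [if_neg hv2, if_neg hw2]
        rw [sum_coscos n K (v/2) (w/2) hn h (by omega) (by omega) (by omega) (by omega)]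
        by_cases hvw : v = w
        · subst hvw
          simp
        · rw [if_neg (show ¬ v/2 = w/2 by omega), if_neg hvw]

/-- Lemma 1 (design-matrix orthogonality): for positive `n, K` with `2K < n`, the Gram matrix
`Wᵀ * W` of the equispaced trigonometric design matrix is diagonal, with `(0,0)` entry `n` and
all remaining `2K` diagonal entries equal to `n / 2`. -/
theorem designW_gram_eq_diagonal (n K : ℕ) (hn : 0 < n) (hK : 0 < K) (h : 2 * K < n) :
    (designW n K)ᵀ * designW n K =
      Matrix.diagonal (fun i : Fin (2 * K + 1) =>
        if i.val = 0 then (n : ℝ) else (n : ℝ) / 2) := by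
  ext i i'
  rw [Matrix.mul_apply, Matrix.diagonal_apply]
  simp only [Matrix.transpose_apply]
  have hs : (∑ j : Fin n, designW n K j i * designW n K j i')
      = ∑ j ∈ Finset.range n, trigCol n i.val j * trigCol n i'.val j :=
    Fin.sum_univ_eq_sum_range (fun jv => trigCol n i.val jv * trigCol n i'.val jv) n
  rw [hs, col_gram n K hn h i.val i'.val i.isLt i'.isLt]
  simp only [Fin.ext_iff]
end

section
/- Let b1 and b2 be independent real-valued random variables on a probability space with E[b1] = 0, b1 square-integrable, and the law of b2 symmetric about zero (b2 and -b2 have the same distribution). Fix real numbers beta1 and beta2. Then the variance of -(beta1 + b1) * sin(beta2 + b2) equals (beta1^2 + Var(b1)) * (1 - cos(2*beta2) * E[cos(2*b2)]) / 2 - beta1^2 * sin(beta2)^2 * (E[cos(b2)])^2. -/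
open MeasureTheory ProbabilityTheory

/-- Entry `D_{2,2}` of the between-individual covariance matrix in Lemma 2: the variance
(expressed as `E[X^2] - (E[X])^2`) of `-(beta1 + b1) * sin(beta2 + b2)` when `b1` and `b2` are
independent, `E[b1] = 0`, `b1` is square-integrable, and the law of `b2` is symmetric about
zero; here `Var(b1) = E[b1^2]`. -/
theorem between_individual_variance_sine_coefficient
    {Ω : Type*} [MeasurableSpace Ω] (P : Measure Ω) [IsProbabilityMeasure P]
    (b1 b2 : Ω → ℝ) (hb1 : Measurable b1) (hb2 : Measurable b2)
    (hindep : IndepFun b1 b2 P) (hL2 : MemLp b1 2 P)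
    (hmean : ∫ ω, b1 ω ∂P = 0)
    (hsym : Measure.map b2 P = Measure.map (fun ω => -b2 ω) P)
    (beta1 beta2 : ℝ) :
    (∫ ω, (-(beta1 + b1 ω) * Real.sin (beta2 + b2 ω)) ^ 2 ∂P) -
        (∫ ω, -(beta1 + b1 ω) * Real.sin (beta2 + b2 ω) ∂P) ^ 2 =
      (beta1 ^ 2 + ∫ ω, (b1 ω) ^ 2 ∂P) *
          (1 - Real.cos (2 * beta2) * ∫ ω, Real.cos (2 * b2 ω) ∂P) / 2 -
        beta1 ^ 2 * Real.sin beta2 ^ 2 * (∫ ω, Real.cos (b2 ω) ∂P) ^ 2 := by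
  -- bounded measurable functions of b2 are integrable
  have hPint : ∀ (f : ℝ → ℝ), Measurable f → (∀ x, |f x| ≤ 1) →
      Integrable (fun ω => f (b2 ω)) P := by
    intro f hf hbd
    exact (integrable_const (1 : ℝ)).mono' ((hf.comp hb2).aestronglyMeasurable)
      (ae_of_all _ fun ω => by simpa using hbd (b2 ω))
  -- odd functions of b2 have zero integral
  have hodd : ∀ (f : ℝ → ℝ), Measurable f → (∀ x, f (-x) = -f x) →
      ∫ ω, f (b2 ω) ∂P = 0 := by
    intro f hf ho
    have h1 : ∫ ω, f (b2 ω) ∂P = ∫ x, f x ∂(Measure.map b2 P) :=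
      (integral_map hb2.aemeasurable hf.aestronglyMeasurable).symm
    have h2 : ∫ x, f x ∂(Measure.map (fun ω => -b2 ω) P) = ∫ ω, f (-b2 ω) ∂P :=
      integral_map hb2.neg.aemeasurable hf.aestronglyMeasurable
    have h3 : ∫ ω, f (-b2 ω) ∂P = - ∫ ω, f (b2 ω) ∂P := by
      simp_rw [ho]; exact integral_neg _
    have h4 : ∫ ω, f (-b2 ω) ∂P = ∫ ω, f (b2 ω) ∂P := by
      rw [← h2, ← hsym, ← h1]
    rw [h3] at h4
    linarith
  have hsinI : ∫ ω, Real.sin (b2 ω) ∂P = 0 :=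
    hodd Real.sin Real.measurable_sin (fun x => Real.sin_neg x)
  have hsin2I : ∫ ω, Real.sin (2 * b2 ω) ∂P = 0 := by
    have := hodd (fun x => Real.sin (2 * x))
      (Real.measurable_sin.comp (measurable_const_mul 2))
      (fun x => by simp [mul_neg])
    simpa using this
  have icos : Integrable (fun ω => Real.cos (b2 ω)) P :=
    hPint Real.cos Real.measurable_cos (fun x => Real.abs_cos_le_one x)
  have isin : Integrable (fun ω => Real.sin (b2 ω)) P :=
    hPint Real.sin Real.measurable_sin (fun x => Real.abs_sin_le_one x)
  have icos2 : Integrable (fun ω => Real.cos (2 * b2 ω)) P := by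
    have := hPint (fun x => Real.cos (2 * x))
      (Real.measurable_cos.comp (measurable_const_mul 2))
      (fun x => Real.abs_cos_le_one _)
    simpa using this
  have isin2 : Integrable (fun ω => Real.sin (2 * b2 ω)) P := by
    have := hPint (fun x => Real.sin (2 * x))
      (Real.measurable_sin.comp (measurable_const_mul 2))
      (fun x => Real.abs_sin_le_one _)
    simpa using this
  -- E[sin(β₂ + b₂)] = sin β₂ * E[cos b₂]
  have hEsin : ∫ ω, Real.sin (beta2 + b2 ω) ∂P
      = Real.sin beta2 * ∫ ω, Real.cos (b2 ω) ∂P := by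
    simp_rw [Real.sin_add]
    rw [integral_add (icos.const_mul _) (isin.const_mul _),
      integral_const_mul, integral_const_mul, hsinI]
    ring
  -- E[sin²(β₂ + b₂)] = (1 - cos(2β₂) E[cos(2b₂)]) / 2
  have hEsin2 : ∫ ω, Real.sin (beta2 + b2 ω) ^ 2 ∂P
      = (1 - Real.cos (2 * beta2) * ∫ ω, Real.cos (2 * b2 ω) ∂P) / 2 := by
    have hrw : ∀ ω, Real.sin (beta2 + b2 ω) ^ 2
        = 1 / 2 - (Real.cos (2 * beta2) * Real.cos (2 * b2 ω)
            - Real.sin (2 * beta2) * Real.sin (2 * b2 ω)) / 2 := by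
      intro ω
      rw [Real.sin_sq, Real.cos_sq,
        show 2 * (beta2 + b2 ω) = 2 * beta2 + 2 * b2 ω by ring, Real.cos_add]
      ring
    have i1 : Integrable (fun ω => Real.cos (2 * beta2) * Real.cos (2 * b2 ω)
        - Real.sin (2 * beta2) * Real.sin (2 * b2 ω)) P :=
      (icos2.const_mul _).sub (isin2.const_mul _)
    have i2 : Integrable (fun ω => (Real.cos (2 * beta2) * Real.cos (2 * b2 ω)
        - Real.sin (2 * beta2) * Real.sin (2 * b2 ω)) / 2) P := i1.div_const _
    have i3 : Integrable (fun ω => Real.cos (2 * beta2) * Real.cos (2 * b2 ω)) P :=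
      icos2.const_mul _
    have i4 : Integrable (fun ω => Real.sin (2 * beta2) * Real.sin (2 * b2 ω)) P :=
      isin2.const_mul _
    simp_rw [hrw]
    rw [integral_sub (integrable_const _) i2, integral_div, integral_div, integral_sub i3 i4,
      integral_const_mul, integral_const_mul, hsin2I, integral_const]
    simp
    ring
  -- integrability of b1 and b1²
  have ib1 : Integrable b1 P := hL2.integrable one_le_two
  have ib1sq : Integrable (fun ω => b1 ω ^ 2) P := by
    have := hL2.integrable_sq
    simpa [sq] using this
  -- E[(β₁ + b₁)²] = β₁² + E[b₁²]
  have hEb1sq : ∫ ω, (beta1 + b1 ω) ^ 2 ∂P = beta1 ^ 2 + ∫ ω, b1 ω ^ 2 ∂P := by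
    have hrw : ∀ ω, (beta1 + b1 ω) ^ 2 = beta1 ^ 2 + (2 * beta1 * b1 ω + b1 ω ^ 2) := by
      intro ω; ring
    have i5 : Integrable (fun ω => 2 * beta1 * b1 ω) P := ib1.const_mul _
    have i6 : Integrable (fun ω => 2 * beta1 * b1 ω + b1 ω ^ 2) P := i5.add ib1sq
    simp_rw [hrw]
    rw [integral_add (integrable_const _) i6, integral_add i5 ib1sq,
      integral_const_mul, hmean, integral_const]
    simp
  -- E[β₁ + b₁] = β₁
  have hEb1 : ∫ ω, (beta1 + b1 ω) ∂P = beta1 := by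
    rw [integral_add (integrable_const _) ib1, hmean, integral_const]
    simp
  -- independence of transformed variables
  have hind1 : IndepFun (fun ω => beta1 + b1 ω) (fun ω => Real.sin (beta2 + b2 ω)) P :=
    hindep.comp (measurable_const_add beta1) (Real.measurable_sin.comp (measurable_const_add beta2))
  have hind2 : IndepFun (fun ω => (beta1 + b1 ω) ^ 2) (fun ω => Real.sin (beta2 + b2 ω) ^ 2) P :=
    hindep.comp ((measurable_const_add beta1).pow_const 2)
      ((Real.measurable_sin.comp (measurable_const_add beta2)).pow_const 2)
  -- E[X]
  have hEX : ∫ ω, -(beta1 + b1 ω) * Real.sin (beta2 + b2 ω) ∂P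
      = -(beta1 * (Real.sin beta2 * ∫ ω, Real.cos (b2 ω) ∂P)) := by
    have hmul : ∫ ω, (beta1 + b1 ω) * Real.sin (beta2 + b2 ω) ∂P
        = (∫ ω, (beta1 + b1 ω) ∂P) * ∫ ω, Real.sin (beta2 + b2 ω) ∂P :=
      hind1.integral_mul_eq_mul_integral ((measurable_const_add beta1).comp hb1).aestronglyMeasurable
        ((Real.measurable_sin.comp (measurable_const_add beta2)).comp hb2).aestronglyMeasurable
    have : ∫ ω, -(beta1 + b1 ω) * Real.sin (beta2 + b2 ω) ∂P
        = - ∫ ω, (beta1 + b1 ω) * Real.sin (beta2 + b2 ω) ∂P := by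
      rw [← integral_neg]; congr 1; funext ω; ring
    rw [this, hmul, hEb1, hEsin]
  -- E[X²]
  have hEX2 : ∫ ω, (-(beta1 + b1 ω) * Real.sin (beta2 + b2 ω)) ^ 2 ∂P
      = (beta1 ^ 2 + ∫ ω, b1 ω ^ 2 ∂P) *
        ((1 - Real.cos (2 * beta2) * ∫ ω, Real.cos (2 * b2 ω) ∂P) / 2) := by
    have hmul : ∫ ω, (beta1 + b1 ω) ^ 2 * Real.sin (beta2 + b2 ω) ^ 2 ∂P
        = (∫ ω, (beta1 + b1 ω) ^ 2 ∂P) * ∫ ω, Real.sin (beta2 + b2 ω) ^ 2 ∂P :=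
      hind2.integral_mul_eq_mul_integral (((measurable_const_add beta1).pow_const 2).comp hb1).aestronglyMeasurable
        (((Real.measurable_sin.comp (measurable_const_add beta2)).pow_const 2).comp
          hb2).aestronglyMeasurable
    have hrw : ∀ ω, (-(beta1 + b1 ω) * Real.sin (beta2 + b2 ω)) ^ 2
        = (beta1 + b1 ω) ^ 2 * Real.sin (beta2 + b2 ω) ^ 2 := by intro ω; ring
    simp_rw [hrw]
    rw [hmul, hEb1sq, hEsin2]
  rw [hEX, hEX2]
  ring
end

section
/- Let b1 and b2 be independent real-valued random variables on a probability space with E[b1] = 0, b1 square-integrable, and the law of b2 symmetric about zero (b2 and -b2 have the same distribution). Fix real numbers beta1 and beta2. Then the covariance of -(beta1 + b1) * sin(beta2 + b2) and (beta1 + b1) * cos(beta2 + b2), i.e., E[gamma1 * gamma2] - E[gamma1] * E[gamma2] with gamma1 = -(beta1 + b1)*sin(beta2 + b2) and gamma2 = (beta1 + b1)*cos(beta2 + b2), equals -sin(beta2) * cos(beta2) * E[cos(2*b2)] * (beta1^2 + Var(b1)) + beta1^2 * sin(beta2) * cos(beta2) * (E[cos(b2)])^2. -/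
open MeasureTheory ProbabilityTheory

/-- Entry `D_{2,3}` of the between-individual covariance matrix in Lemma 2: the covariance
`E[γ1·γ2] - E[γ1]·E[γ2]` of `γ1 = -(beta1 + b1) * sin(beta2 + b2)` and
`γ2 = (beta1 + b1) * cos(beta2 + b2)` when `b1` and `b2` are independent, `E[b1] = 0`, `b1` is
square-integrable, and the law of `b2` is symmetric about zero; here `Var(b1) = E[b1^2]`. -/
theorem between_individual_covariance_sine_cosine
    {Ω : Type*} [MeasurableSpace Ω] (P : Measure Ω) [IsProbabilityMeasure P]
    (b1 b2 : Ω → ℝ) (hb1 : Measurable b1) (hb2 : Measurable b2)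
    (hindep : IndepFun b1 b2 P) (hL2 : MemLp b1 2 P)
    (hmean : ∫ ω, b1 ω ∂P = 0)
    (hsym : Measure.map b2 P = Measure.map (fun ω => -b2 ω) P)
    (beta1 beta2 : ℝ) :
    (∫ ω, (-(beta1 + b1 ω) * Real.sin (beta2 + b2 ω)) *
          ((beta1 + b1 ω) * Real.cos (beta2 + b2 ω)) ∂P) -
        (∫ ω, -(beta1 + b1 ω) * Real.sin (beta2 + b2 ω) ∂P) *
          (∫ ω, (beta1 + b1 ω) * Real.cos (beta2 + b2 ω) ∂P) =
      -(Real.sin beta2 * Real.cos beta2 * (∫ ω, Real.cos (2 * b2 ω) ∂P)) *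
          (beta1 ^ 2 + ∫ ω, (b1 ω) ^ 2 ∂P) +
        beta1 ^ 2 * Real.sin beta2 * Real.cos beta2 * (∫ ω, Real.cos (b2 ω) ∂P) ^ 2 := by
  -- basic integrability
  have hb1i : Integrable b1 P := hL2.integrable one_le_two
  have hb1sq : Integrable (fun ω => (b1 ω) ^ 2) P := hL2.integrable_sq
  have hbdd : ∀ g : ℝ → ℝ, Measurable g → (∀ x, |g x| ≤ 1) →
      Integrable (fun ω => g (b2 ω)) P := by
    intro g hg hg1
    refine ⟨(hg.comp hb2).aestronglyMeasurable, ?_⟩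
    exact HasFiniteIntegral.of_bounded (C := 1) (ae_of_all _ fun ω => hg1 (b2 ω))
  have hsinb : Integrable (fun ω => Real.sin (b2 ω)) P :=
    hbdd _ Real.measurable_sin fun x => Real.abs_sin_le_one x
  have hcosb : Integrable (fun ω => Real.cos (b2 ω)) P :=
    hbdd _ Real.measurable_cos fun x => Real.abs_cos_le_one x
  have hsin2b : Integrable (fun ω => Real.sin (2 * b2 ω)) P :=
    hbdd (fun x => Real.sin (2 * x)) (Real.measurable_sin.comp (measurable_const_mul 2))
      fun x => Real.abs_sin_le_one _
  have hcos2b : Integrable (fun ω => Real.cos (2 * b2 ω)) P :=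
    hbdd (fun x => Real.cos (2 * x)) (Real.measurable_cos.comp (measurable_const_mul 2))
      fun x => Real.abs_cos_le_one _
  -- symmetry kills sine integrals
  have hsym_int : ∀ g : ℝ → ℝ, Measurable g →
      ∫ ω, g (b2 ω) ∂P = ∫ ω, g (-b2 ω) ∂P := by
    intro g hg
    rw [← integral_map hb2.aemeasurable hg.aestronglyMeasurable, hsym,
      integral_map (φ := fun ω => -b2 ω) (hb2.neg.aemeasurable) hg.aestronglyMeasurable]
  have hsin0 : ∫ ω, Real.sin (b2 ω) ∂P = 0 := by
    have h := hsym_int Real.sin Real.measurable_sin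
    simp only [Real.sin_neg] at h
    rw [integral_neg] at h
    linarith
  have hsin20 : ∫ ω, Real.sin (2 * b2 ω) ∂P = 0 := by
    have h := hsym_int (fun x => Real.sin (2 * x))
      (Real.measurable_sin.comp (measurable_const_mul 2))
    simp only [mul_neg, Real.sin_neg] at h
    rw [integral_neg] at h
    linarith
  -- independence product rule
  have key : ∀ (f g : ℝ → ℝ), Measurable f → Measurable g →
      ∫ ω, f (b1 ω) * g (b2 ω) ∂P = (∫ ω, f (b1 ω) ∂P) * ∫ ω, g (b2 ω) ∂P := by
    intro f g hf hg
    exact IndepFun.integral_mul_eq_mul_integral (hindep.comp hf hg)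
      ((hf.comp hb1).aestronglyMeasurable) ((hg.comp hb2).aestronglyMeasurable)
  -- first moment integrals
  have hEb1 : ∫ ω, (beta1 + b1 ω) ∂P = beta1 := by
    rw [integral_add (integrable_const _) hb1i, hmean, integral_const]
    simp
  have hEb1sq : ∫ ω, (beta1 + b1 ω) ^ 2 ∂P = beta1 ^ 2 + ∫ ω, (b1 ω) ^ 2 ∂P := by
    have : ∀ ω, (beta1 + b1 ω) ^ 2 = beta1 ^ 2 + ((2 * beta1) * b1 ω + (b1 ω) ^ 2) := by
      intro ω; ring
    simp_rw [this]
    have hsum : Integrable (fun ω => 2 * beta1 * b1 ω + b1 ω ^ 2) P :=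
      (hb1i.const_mul _).add hb1sq
    rw [integral_add (integrable_const _) hsum,
      integral_add (hb1i.const_mul _) hb1sq, integral_const_mul, hmean, integral_const]
    simp
  have hEsin : ∫ ω, Real.sin (beta2 + b2 ω) ∂P =
      Real.sin beta2 * ∫ ω, Real.cos (b2 ω) ∂P := by
    simp_rw [Real.sin_add]
    rw [integral_add (hcosb.const_mul _) (hsinb.const_mul _), integral_const_mul,
      integral_const_mul, hsin0]
    ring
  have hEcos : ∫ ω, Real.cos (beta2 + b2 ω) ∂P =
      Real.cos beta2 * ∫ ω, Real.cos (b2 ω) ∂P := by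
    simp_rw [Real.cos_add]
    rw [integral_sub (hcosb.const_mul _) (hsinb.const_mul _), integral_const_mul,
      integral_const_mul, hsin0]
    ring
  have hEsin2 : ∫ ω, Real.sin (2 * (beta2 + b2 ω)) ∂P =
      Real.sin (2 * beta2) * ∫ ω, Real.cos (2 * b2 ω) ∂P := by
    have : ∀ ω, Real.sin (2 * (beta2 + b2 ω)) =
        Real.sin (2 * beta2) * Real.cos (2 * b2 ω) +
          Real.cos (2 * beta2) * Real.sin (2 * b2 ω) := by
      intro ω; rw [← Real.sin_add]; ring_nf
    simp_rw [this]
    rw [integral_add (hcos2b.const_mul _) (hsin2b.const_mul _), integral_const_mul,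
      integral_const_mul, hsin20]
    ring
  -- the three expectations
  have hIγ1 : ∫ ω, -(beta1 + b1 ω) * Real.sin (beta2 + b2 ω) ∂P =
      -beta1 * (Real.sin beta2 * ∫ ω, Real.cos (b2 ω) ∂P) := by
    have := key (fun x => -(beta1 + x)) (fun y => Real.sin (beta2 + y))
      ((measurable_const.add measurable_id).neg)
      (Real.measurable_sin.comp (measurable_const.add measurable_id))
    rw [this]
    have : ∫ ω, -(beta1 + b1 ω) ∂P = -beta1 := by rw [integral_neg, hEb1]
    rw [this, hEsin]
  have hIγ2 : ∫ ω, (beta1 + b1 ω) * Real.cos (beta2 + b2 ω) ∂P =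
      beta1 * (Real.cos beta2 * ∫ ω, Real.cos (b2 ω) ∂P) := by
    have := key (fun x => (beta1 + x)) (fun y => Real.cos (beta2 + y))
      (measurable_const.add measurable_id)
      (Real.measurable_cos.comp (measurable_const.add measurable_id))
    rw [this, hEb1, hEcos]
  have hIprod : ∫ ω, (-(beta1 + b1 ω) * Real.sin (beta2 + b2 ω)) *
        ((beta1 + b1 ω) * Real.cos (beta2 + b2 ω)) ∂P =
      -(beta1 ^ 2 + ∫ ω, (b1 ω) ^ 2 ∂P) *
        (Real.sin (2 * beta2) / 2 * ∫ ω, Real.cos (2 * b2 ω) ∂P) := by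
    have hrw : ∀ ω, (-(beta1 + b1 ω) * Real.sin (beta2 + b2 ω)) *
        ((beta1 + b1 ω) * Real.cos (beta2 + b2 ω)) =
        (-(beta1 + b1 ω) ^ 2) * (Real.sin (2 * (beta2 + b2 ω)) / 2) := by
      intro ω
      rw [Real.sin_two_mul]
      ring
    simp_rw [hrw]
    rw [key (fun x => -(beta1 + x) ^ 2) (fun y => Real.sin (2 * (beta2 + y)) / 2)
      (((measurable_const.add measurable_id).pow_const 2).neg)
      ((Real.measurable_sin.comp ((measurable_const.add measurable_id).const_mul 2)).div_const 2)]
    rw [integral_neg, hEb1sq, integral_div, hEsin2]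
    ring
  rw [hIγ1, hIγ2, hIprod, Real.sin_two_mul]
  ring
end

section
/- Let b1 and b2 be independent real-valued random variables on a probability space with E[b1] = 0, b1 square-integrable, and the law of b2 symmetric about zero (b2 and -b2 have the same distribution). Fix real numbers beta1 and beta2. Then the variance of (beta1 + b1) * cos(beta2 + b2) equals (1 + cos(2*beta2) * E[cos(2*b2)]) / 2 * (beta1^2 + Var(b1)) - beta1^2 * cos(beta2)^2 * (E[cos(b2)])^2. -/
open MeasureTheory ProbabilityTheory

lemma odd_sin_int_zero {Ω : Type*} [MeasurableSpace Ω] (P : Measure Ω) [IsProbabilityMeasure P]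
    (b2 : Ω → ℝ) (hb2 : Measurable b2)
    (hsym : Measure.map b2 P = Measure.map (fun ω => -b2 ω) P) (c : ℝ) :
    ∫ ω, Real.sin (c * b2 ω) ∂P = 0 := by
  have hm : Measurable fun x : ℝ => Real.sin (c * x) :=
    Real.measurable_sin.comp (measurable_const.mul measurable_id)
  have h1 : ∫ ω, Real.sin (c * b2 ω) ∂P = ∫ x, Real.sin (c * x) ∂(Measure.map b2 P) :=
    (integral_map hb2.aemeasurable hm.aestronglyMeasurable).symm
  have h2 : ∫ x, Real.sin (c * x) ∂(Measure.map (fun ω => -b2 ω) P)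
      = ∫ ω, Real.sin (c * (-b2 ω)) ∂P :=
    integral_map (hb2.neg).aemeasurable hm.aestronglyMeasurable
  have h3 : ∫ ω, Real.sin (c * b2 ω) ∂P = ∫ ω, -Real.sin (c * b2 ω) ∂P := by
    rw [h1, hsym, h2]
    congr 1; funext ω; rw [mul_neg, Real.sin_neg]
  rw [integral_neg] at h3
  linarith

/-- Entry `D_{3,3}` of the between-individual covariance matrix in Lemma 2: the variance
(expressed as `E[X^2] - (E[X])^2`) of `(beta1 + b1) * cos(beta2 + b2)` when `b1` and `b2` are
independent, `E[b1] = 0`, `b1` is square-integrable, and the law of `b2` is symmetric about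
zero; here `Var(b1) = E[b1^2]`. -/
theorem between_individual_variance_cosine_coefficient
    {Ω : Type*} [MeasurableSpace Ω] (P : Measure Ω) [IsProbabilityMeasure P]
    (b1 b2 : Ω → ℝ) (hb1 : Measurable b1) (hb2 : Measurable b2)
    (hindep : IndepFun b1 b2 P) (hL2 : MemLp b1 2 P)
    (hmean : ∫ ω, b1 ω ∂P = 0)
    (hsym : Measure.map b2 P = Measure.map (fun ω => -b2 ω) P)
    (beta1 beta2 : ℝ) :
    (∫ ω, ((beta1 + b1 ω) * Real.cos (beta2 + b2 ω)) ^ 2 ∂P) -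
        (∫ ω, (beta1 + b1 ω) * Real.cos (beta2 + b2 ω) ∂P) ^ 2 =
      (1 + Real.cos (2 * beta2) * ∫ ω, Real.cos (2 * b2 ω) ∂P) / 2 *
          (beta1 ^ 2 + ∫ ω, (b1 ω) ^ 2 ∂P) -
        beta1 ^ 2 * Real.cos beta2 ^ 2 * (∫ ω, Real.cos (b2 ω) ∂P) ^ 2 := by
  set X : Ω → ℝ := fun ω => beta1 + b1 ω with hX
  have hXm : Measurable X := measurable_const.add hb1
  have hb1int : Integrable b1 P := hL2.integrable (by norm_num)
  -- E[X] = beta1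
  have hEX : ∫ ω, X ω ∂P = beta1 := by
    have h : (∫ ω, (beta1 + b1 ω) ∂P) = (∫ _ω, beta1 ∂P) + ∫ ω, b1 ω ∂P :=
      integral_add (integrable_const beta1) hb1int
    simp only [hX]
    rw [h, hmean]; simp
  -- E[X^2] = beta1^2 + E[b1^2]
  have hEX2 : ∫ ω, X ω ^ 2 ∂P = beta1 ^ 2 + ∫ ω, b1 ω ^ 2 ∂P := by
    have hA : Integrable (fun ω => 2 * beta1 * b1 ω) P := hb1int.const_mul _
    have hB : Integrable (fun ω => b1 ω ^ 2) P := hL2.integrable_sq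
    have hc : ∀ ω, X ω ^ 2 = beta1 ^ 2 + (2 * beta1 * b1 ω + b1 ω ^ 2) := by
      intro ω; simp only [hX]; ring
    have hsum : Integrable (fun ω => 2 * beta1 * b1 ω + b1 ω ^ 2) P := hA.add hB
    have h1 : (∫ ω, (beta1 ^ 2 + (2 * beta1 * b1 ω + b1 ω ^ 2)) ∂P)
        = (∫ _ω, beta1 ^ 2 ∂P) + ∫ ω, (2 * beta1 * b1 ω + b1 ω ^ 2) ∂P :=
      integral_add (integrable_const _) hsum
    have h2 : (∫ ω, (2 * beta1 * b1 ω + b1 ω ^ 2) ∂P)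
        = (∫ ω, 2 * beta1 * b1 ω ∂P) + ∫ ω, b1 ω ^ 2 ∂P := integral_add hA hB
    calc ∫ ω, X ω ^ 2 ∂P = ∫ ω, (beta1 ^ 2 + (2 * beta1 * b1 ω + b1 ω ^ 2)) ∂P := by
          exact integral_congr_ae (ae_of_all _ hc)
      _ = beta1 ^ 2 + ∫ ω, b1 ω ^ 2 ∂P := by
          rw [h1, h2, integral_const_mul, hmean]; simp
  -- independence of X and functions of b2
  have hindep' : ∀ (f g : ℝ → ℝ), Measurable f → Measurable g →
      IndepFun (fun ω => f (X ω)) (fun ω => g (b2 ω)) P := by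
    intro f g hf hg
    exact hindep.comp (hf.comp (measurable_const.add measurable_id)) hg
  -- sin integrals vanish
  have hsin1 : ∫ ω, Real.sin (b2 ω) ∂P = 0 := by
    have := odd_sin_int_zero P b2 hb2 hsym 1; simpa using this
  have hsin2 : ∫ ω, Real.sin (2 * b2 ω) ∂P = 0 := odd_sin_int_zero P b2 hb2 hsym 2
  have hcosm : Measurable fun ω => Real.cos (beta2 + b2 ω) :=
    Real.measurable_cos.comp (measurable_const.add hb2)
  -- E[cos(beta2 + b2)]
  have hcb : Integrable (fun ω => Real.cos beta2 * Real.cos (b2 ω)) P :=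
    ((integrable_const (1:ℝ)).mono' (Real.measurable_cos.comp hb2).aestronglyMeasurable
      (ae_of_all _ fun ω => by simpa using Real.abs_cos_le_one _)).const_mul _
  have hsb : Integrable (fun ω => Real.sin beta2 * Real.sin (b2 ω)) P :=
    ((integrable_const (1:ℝ)).mono' (Real.measurable_sin.comp hb2).aestronglyMeasurable
      (ae_of_all _ fun ω => by simpa using Real.abs_sin_le_one _)).const_mul _
  have hEcos : ∫ ω, Real.cos (beta2 + b2 ω) ∂P
      = Real.cos beta2 * ∫ ω, Real.cos (b2 ω) ∂P := by
    have h1 : (∫ ω, (Real.cos beta2 * Real.cos (b2 ω) - Real.sin beta2 * Real.sin (b2 ω)) ∂P)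
        = (∫ ω, Real.cos beta2 * Real.cos (b2 ω) ∂P)
          - ∫ ω, Real.sin beta2 * Real.sin (b2 ω) ∂P := integral_sub hcb hsb
    calc ∫ ω, Real.cos (beta2 + b2 ω) ∂P
        = ∫ ω, (Real.cos beta2 * Real.cos (b2 ω) - Real.sin beta2 * Real.sin (b2 ω)) ∂P := by
          exact integral_congr_ae (ae_of_all _ fun ω => Real.cos_add _ _)
      _ = Real.cos beta2 * ∫ ω, Real.cos (b2 ω) ∂P := by
          rw [h1, integral_const_mul, integral_const_mul, hsin1]; ring
  -- E[cos^2(beta2 + b2)]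
  have hcb2 : Integrable (fun ω => Real.cos (2*beta2)/2 * Real.cos (2 * b2 ω)) P :=
    ((integrable_const (1:ℝ)).mono'
      (Real.measurable_cos.comp (measurable_const.mul hb2)).aestronglyMeasurable
      (ae_of_all _ fun ω => by simpa using Real.abs_cos_le_one _)).const_mul _
  have hsb2 : Integrable (fun ω => Real.sin (2*beta2)/2 * Real.sin (2 * b2 ω)) P :=
    ((integrable_const (1:ℝ)).mono'
      (Real.measurable_sin.comp (measurable_const.mul hb2)).aestronglyMeasurable
      (ae_of_all _ fun ω => by simpa using Real.abs_sin_le_one _)).const_mul _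
  have hEcos2 : ∫ ω, Real.cos (beta2 + b2 ω) ^ 2 ∂P
      = (1 + Real.cos (2 * beta2) * ∫ ω, Real.cos (2 * b2 ω) ∂P) / 2 := by
    have key : ∀ ω, Real.cos (beta2 + b2 ω) ^ 2
        = 1/2 + (Real.cos (2*beta2)/2 * Real.cos (2 * b2 ω)
          - Real.sin (2*beta2)/2 * Real.sin (2 * b2 ω)) := by
      intro ω
      have h := Real.cos_sq (beta2 + b2 ω)
      rw [h, show 2 * (beta2 + b2 ω) = 2*beta2 + 2*b2 ω by ring, Real.cos_add]
      ring
    have hsum : Integrable (fun ω => Real.cos (2*beta2)/2 * Real.cos (2 * b2 ω)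
        - Real.sin (2*beta2)/2 * Real.sin (2 * b2 ω)) P := hcb2.sub hsb2
    have h1 : (∫ ω, (1/2 + (Real.cos (2*beta2)/2 * Real.cos (2 * b2 ω)
          - Real.sin (2*beta2)/2 * Real.sin (2 * b2 ω))) ∂P)
        = (∫ _ω, (1:ℝ)/2 ∂P) + ∫ ω, (Real.cos (2*beta2)/2 * Real.cos (2 * b2 ω)
          - Real.sin (2*beta2)/2 * Real.sin (2 * b2 ω)) ∂P :=
      integral_add (integrable_const _) hsum
    have h2 : (∫ ω, (Real.cos (2*beta2)/2 * Real.cos (2 * b2 ω)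
          - Real.sin (2*beta2)/2 * Real.sin (2 * b2 ω)) ∂P)
        = (∫ ω, Real.cos (2*beta2)/2 * Real.cos (2 * b2 ω) ∂P)
          - ∫ ω, Real.sin (2*beta2)/2 * Real.sin (2 * b2 ω) ∂P := integral_sub hcb2 hsb2
    calc ∫ ω, Real.cos (beta2 + b2 ω) ^ 2 ∂P
        = ∫ ω, (1/2 + (Real.cos (2*beta2)/2 * Real.cos (2 * b2 ω)
            - Real.sin (2*beta2)/2 * Real.sin (2 * b2 ω))) ∂P :=
          integral_congr_ae (ae_of_all _ key)
      _ = (1 + Real.cos (2 * beta2) * ∫ ω, Real.cos (2 * b2 ω) ∂P) / 2 := by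
          rw [h1, h2, integral_const_mul, integral_const_mul, hsin2]
          simp; ring
  -- first moment of product
  have hE1 : ∫ ω, X ω * Real.cos (beta2 + b2 ω) ∂P
      = beta1 * (Real.cos beta2 * ∫ ω, Real.cos (b2 ω) ∂P) := by
    have hi : IndepFun X (fun ω => Real.cos (beta2 + b2 ω)) P :=
      hindep' id (fun x => Real.cos (beta2 + x)) measurable_id
        (Real.measurable_cos.comp (measurable_const.add measurable_id))
    have h : ∫ ω, X ω * Real.cos (beta2 + b2 ω) ∂P
        = (∫ ω, X ω ∂P) * ∫ ω, Real.cos (beta2 + b2 ω) ∂P :=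
      hi.integral_fun_mul_eq_mul_integral hXm.aestronglyMeasurable hcosm.aestronglyMeasurable
    rw [h, hEX, hEcos]
  -- second moment of product
  have hE2 : ∫ ω, (X ω * Real.cos (beta2 + b2 ω)) ^ 2 ∂P
      = (beta1 ^ 2 + ∫ ω, b1 ω ^ 2 ∂P)
        * ((1 + Real.cos (2 * beta2) * ∫ ω, Real.cos (2 * b2 ω) ∂P) / 2) := by
    have hi : IndepFun (fun ω => X ω ^ 2) (fun ω => Real.cos (beta2 + b2 ω) ^ 2) P :=
      hindep' (fun x => x ^ 2) (fun x => Real.cos (beta2 + x) ^ 2)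
        (measurable_id.pow_const 2)
        ((Real.measurable_cos.comp (measurable_const.add measurable_id)).pow_const 2)
    have h : ∫ ω, X ω ^ 2 * Real.cos (beta2 + b2 ω) ^ 2 ∂P
        = (∫ ω, X ω ^ 2 ∂P) * ∫ ω, Real.cos (beta2 + b2 ω) ^ 2 ∂P :=
      hi.integral_fun_mul_eq_mul_integral (hXm.pow_const 2).aestronglyMeasurable
        (hcosm.pow_const 2).aestronglyMeasurable
    calc ∫ ω, (X ω * Real.cos (beta2 + b2 ω)) ^ 2 ∂P
        = ∫ ω, X ω ^ 2 * Real.cos (beta2 + b2 ω) ^ 2 ∂P :=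
          integral_congr_ae (ae_of_all _ fun ω => by ring)
      _ = _ := by rw [h, hEX2, hEcos2]
  rw [show (∫ ω, ((beta1 + b1 ω) * Real.cos (beta2 + b2 ω)) ^ 2 ∂P)
      = ∫ ω, (X ω * Real.cos (beta2 + b2 ω)) ^ 2 ∂P from rfl,
    show (∫ ω, (beta1 + b1 ω) * Real.cos (beta2 + b2 ω) ∂P)
      = ∫ ω, X ω * Real.cos (beta2 + b2 ω) ∂P from rfl, hE1, hE2]
  ring
end
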